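/- Let χ_t denote the normalized indicator (1/|B(0,t)|)·𝟙_{B(0,t)} of the ball of radius t in ℝⁿ. If |x| ≥ 2|y| then (∫₀^∞ t⁴·|χ_t(x−y) − χ_t(x)|² t^{−5} dt)^{1/2} ≤ C·|y|^{1/2}·|x|^{−n−1/2}. -/

import Mathlib

/-!
Since `χ_t(z) = 1 / (c_n tⁿ)` for `|z| < t` and `0` otherwise, the difference `χ_t(x - y) - χ_t(x)`
vanishes unless `t` lies between `|x - y|` and `|x|`. This interval has length at most `|y|` and
lies beyond `|x| / 2`, where the integrand `1 / (c_n² t²ⁿ⁺¹)` is at most `2²ⁿ⁺¹ / (c_n² |x|²ⁿ⁺¹)`.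
So the integral is `O(|y| |x|^(-2n-1))`, and taking square roots gives the claim.
-/

open MeasureTheory

/-- `χ_t`, the normalized indicator of the ball `B(0,t)` in `ℝⁿ`. -/
noncomputable def normInd (n : ℕ) (t : ℝ) (z : EuclideanSpace ℝ (Fin n)) : ℝ :=
  (Metric.ball (0 : EuclideanSpace ℝ (Fin n)) t).indicator
    (fun _ => (volume (Metric.ball (0 : EuclideanSpace ℝ (Fin n)) t)).toReal⁻¹) z

open Set

noncomputable def unitBallVol (n : ℕ) : ℝ :=
  (volume (Metric.ball (0 : EuclideanSpace ℝ (Fin n)) 1)).toReal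

lemma unitBallVol_pos (n : ℕ) : 0 < unitBallVol n :=
  ENNReal.toReal_pos (Metric.measure_ball_pos volume 0 one_pos).ne' measure_ball_lt_top.ne

lemma volume_ball_toReal {n : ℕ} {t : ℝ} (ht : 0 < t) :
    (volume (Metric.ball (0 : EuclideanSpace ℝ (Fin n)) t)).toReal = unitBallVol n * t ^ n := by
  rw [Measure.addHaar_ball_of_pos volume 0 ht, ENNReal.toReal_mul,
    ENNReal.toReal_ofReal (by positivity), finrank_euclideanSpace_fin, mul_comm, unitBallVol]

lemma normInd_eq_ite (n : ℕ) (t : ℝ) (z : EuclideanSpace ℝ (Fin n)) :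
    normInd n t z = if ‖z‖ < t then (unitBallVol n * t ^ n)⁻¹ else 0 := by
  split_ifs with h
  · rw [normInd, indicator_of_mem (mem_ball_zero_iff.2 h),
      volume_ball_toReal ((norm_nonneg z).trans_lt h)]
  · exact indicator_of_notMem (fun hm => h (mem_ball_zero_iff.1 hm)) _

lemma sq_ite_sub_ite_eq_indicator (f : ℝ → ℝ) (r s t : ℝ) :
    ((if r < t then f t else 0) - (if s < t then f t else 0)) ^ 2 =
      (Ioc (min r s) (max r s)).indicator (fun t => f t ^ 2) t := by
  by_cases hr : r < t <;> by_cases hs : s < t <;> simp [hr, hs, indicator, not_lt.1]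

lemma setIntegral_Ioc_inv_pow_le {a b : ℝ} (ha : 0 < a) (hab : a ≤ b) (k : ℕ) :
    ∫ t in Ioc a b, (t ^ k)⁻¹ ≤ (b - a) / a ^ k := by
  have hbound : ∀ t ∈ Ioc a b, ‖(t ^ k)⁻¹‖ ≤ (a ^ k)⁻¹ := fun t ht => by
    rw [Real.norm_of_nonneg (by have := ha.trans ht.1; positivity)]
    exact inv_anti₀ (by positivity) (pow_le_pow_left₀ ha.le ht.1.le k)
  calc ∫ t in Ioc a b, (t ^ k)⁻¹
      ≤ (a ^ k)⁻¹ * volume.real (Ioc a b) :=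
        (le_abs_self _).trans (norm_setIntegral_le_of_norm_le_const measure_Ioc_lt_top hbound)
    _ = (b - a) / a ^ k := by
        rw [Real.volume_real_Ioc_of_le hab, div_eq_inv_mul]

lemma half_norm_le_min_norm_sub {E : Type*} [SeminormedAddCommGroup E] {x y : E}
    (h : 2 * ‖y‖ ≤ ‖x‖) : ‖x‖ / 2 ≤ min ‖x - y‖ ‖x‖ :=
  le_min (by linarith [norm_sub_norm_le x y]) (by linarith [norm_nonneg x])

lemma max_sub_min_norm_sub_le {E : Type*} [SeminormedAddCommGroup E] (x y : E) :
    max ‖x - y‖ ‖x‖ - min ‖x - y‖ ‖x‖ ≤ ‖y‖ := by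
  rw [max_sub_min_eq_abs]
  simpa using abs_norm_sub_norm_le x (x - y)

lemma sqrt_mul_div_pow_eq_rpow {K u v : ℝ} (hK : 0 ≤ K) (hv : 0 ≤ v) (n : ℕ) :
    √(K * u / v ^ (2 * n + 1)) = √K * u ^ ((1 : ℝ) / 2) * v ^ (-(n : ℝ) - 1 / 2) := by
  have hv' : (√(v ^ (2 * n + 1)))⁻¹ = v ^ (-(n : ℝ) - 1 / 2) := by
    rw [Real.sqrt_eq_rpow, ← Real.rpow_natCast, ← Real.rpow_mul hv, ← Real.rpow_neg hv]
    push_cast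
    ring_nf
  rw [Real.sqrt_div' _ (by positivity), Real.sqrt_mul hK, Real.sqrt_eq_rpow u, div_eq_mul_inv, hv']

lemma integral_normInd_sub_sq_le {n : ℕ} {x y : EuclideanSpace ℝ (Fin n)} (h : 2 * ‖y‖ ≤ ‖x‖) :
    ∫ t in Ioi 0, t ^ 4 * (normInd n t (x - y) - normInd n t x) ^ 2 / t ^ 5 ≤
      2 ^ (2 * n + 1) / unitBallVol n ^ 2 * ‖y‖ / ‖x‖ ^ (2 * n + 1) := by
  rcases eq_or_ne x 0 with rfl | hx0
  · obtain rfl : y = 0 := norm_le_zero_iff.1 (by simp at h; linarith)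
    simp
  set c := unitBallVol n
  set a := min ‖x - y‖ ‖x‖
  set b := max ‖x - y‖ ‖x‖
  have hc := unitBallVol_pos n
  have hx : 0 < ‖x‖ := norm_pos_iff.2 hx0
  have ha2 : ‖x‖ / 2 ≤ a := half_norm_le_min_norm_sub h
  have ha : 0 < a := by linarith
  have hintegrand : ∀ t ∈ Ioi (0 : ℝ),
      t ^ 4 * (normInd n t (x - y) - normInd n t x) ^ 2 / t ^ 5 =
        (Ioc a b).indicator (fun t => (c ^ 2)⁻¹ * (t ^ (2 * n + 1))⁻¹) t := by
    intro t (ht : 0 < t)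
    rw [normInd_eq_ite, normInd_eq_ite,
      sq_ite_sub_ite_eq_indicator (fun t => (c * t ^ n)⁻¹)]
    by_cases hab : t ∈ Ioc a b
    · rw [indicator_of_mem hab, indicator_of_mem hab]
      field_simp
      ring
    · rw [indicator_of_notMem hab, indicator_of_notMem hab]
      ring
  have hIoc : Ioc a b ∩ Ioi 0 = Ioc a b :=
    inter_eq_left.2 fun t (ht : t ∈ Ioc a b) => (ha.trans ht.1 : t ∈ Ioi 0)
  calc ∫ t in Ioi 0, t ^ 4 * (normInd n t (x - y) - normInd n t x) ^ 2 / t ^ 5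
      = (c ^ 2)⁻¹ * ∫ t in Ioc a b, (t ^ (2 * n + 1))⁻¹ := by
        rw [setIntegral_congr_fun measurableSet_Ioi hintegrand,
          integral_indicator measurableSet_Ioc, Measure.restrict_restrict measurableSet_Ioc, hIoc,
          integral_const_mul]
    _ ≤ (c ^ 2)⁻¹ * ((b - a) / a ^ (2 * n + 1)) := by
        gcongr
        exact setIntegral_Ioc_inv_pow_le ha min_le_max _
    _ ≤ (c ^ 2)⁻¹ * (‖y‖ / (‖x‖ / 2) ^ (2 * n + 1)) := by
        gcongr
        exact max_sub_min_norm_sub_le x y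
    _ = 2 ^ (2 * n + 1) / c ^ 2 * ‖y‖ / ‖x‖ ^ (2 * n + 1) := by
        rw [div_pow]
        field_simp

theorem stmt_12_general (n : ℕ) :
    ∃ C : ℝ, 0 < C ∧ ∀ x y : EuclideanSpace ℝ (Fin n),
      2 * ‖y‖ ≤ ‖x‖ →
      Real.sqrt (∫ t in Set.Ioi (0 : ℝ),
          t ^ 4 * (normInd n t (x - y) - normInd n t x) ^ 2 / t ^ 5) ≤
        C * ‖y‖ ^ ((1 : ℝ) / 2) * ‖x‖ ^ (-(n : ℝ) - 1 / 2) := by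
  have hK : 0 < 2 ^ (2 * n + 1) / unitBallVol n ^ 2 := by have := unitBallVol_pos n; positivity
  refine ⟨√(2 ^ (2 * n + 1) / unitBallVol n ^ 2), Real.sqrt_pos.2 hK, fun x y h => ?_⟩
  rw [← sqrt_mul_div_pow_eq_rpow hK.le (norm_nonneg x)]
  exact Real.sqrt_le_sqrt (integral_normInd_sub_sq_le h)

theorem stmt_12 (n : ℕ) (hn : 0 < n) :
    ∃ C : ℝ, 0 < C ∧ ∀ x y : EuclideanSpace ℝ (Fin n),
      2 * ‖y‖ ≤ ‖x‖ →
      Real.sqrt (∫ t in Set.Ioi (0 : ℝ),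
          t ^ 4 * (normInd n t (x - y) - normInd n t x) ^ 2 / t ^ 5) ≤
        C * ‖y‖ ^ ((1 : ℝ) / 2) * ‖x‖ ^ (-(n : ℝ) - 1 / 2) :=
  stmt_12_general n
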